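/- Wielandt's inequality: Let A be a real symmetric p x p matrix partitioned in block form with B the top-left k x k block, D the bottom-right (p-k) x (p-k) block, and C the top-right k x (p-k) block. If lambda_k(B) > lambda_1(D) (the smallest eigenvalue of B exceeds the largest eigenvalue of D), then for every j = 1, ..., k: 0 <= lambda_j(A) - lambda_j(B) <= lambda_1(C C^T) / (lambda_j(B) - lambda_1(D)), where eigenvalues are listed in decreasing order. -/

import Mathlib

open Matrix

/-- Eigenvalues of a real symmetric matrix listed in decreasing order:
`eigDesc hA 0` is the largest eigenvalue, `eigDesc hA (Fin.last _)` the smallest. -/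
noncomputable def eigDesc {n : ℕ} {A : Matrix (Fin n) (Fin n) ℝ} (hA : A.IsHermitian) :
    Fin n → ℝ :=
  fun i => hA.eigenvalues (Tuple.sort hA.eigenvalues i.rev)

namespace Wielandt

variable {n : ℕ} {M : Matrix (Fin n) (Fin n) ℝ}

/-- dot product with a fixed vector, as a linear map -/
def dotLin (a : Fin n → ℝ) : (Fin n → ℝ) →ₗ[ℝ] ℝ where
  toFun x := a ⬝ᵥ x
  map_add' x y := dotProduct_add a x y
  map_smul' c x := by simp [dotProduct_smul]

@[simp] lemma dotLin_apply (a x : Fin n → ℝ) : dotLin a x = a ⬝ᵥ x := rfl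

lemma dot_self_nonneg (x : Fin n → ℝ) : 0 ≤ x ⬝ᵥ x :=
  Finset.sum_nonneg fun i _ => mul_self_nonneg _

lemma dot_self_pos {x : Fin n → ℝ} (hx : x ≠ 0) : 0 < x ⬝ᵥ x := by
  rcases lt_or_eq_of_le (dot_self_nonneg x) with h | h
  · exact h
  · exact absurd ((dotProduct_self_eq_zero).1 h.symm) hx

noncomputable def wvec (hM : M.IsHermitian) (i : Fin n) : Fin n → ℝ :=
  ⇑(hM.eigenvectorBasis (Tuple.sort hM.eigenvalues i.rev))

lemma eigDesc_antitone (hM : M.IsHermitian) : Antitone (eigDesc hM) := by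
  intro i j hij
  exact Tuple.monotone_sort hM.eigenvalues (Fin.rev_le_rev.2 hij)

lemma inner_eq_dot (x y : Fin n → ℝ) :
    (inner ℝ ((WithLp.equiv 2 (Fin n → ℝ)).symm x) ((WithLp.equiv 2 (Fin n → ℝ)).symm y) : ℝ)
      = x ⬝ᵥ y := by
  simp [PiLp.inner_apply, dotProduct, RCLike.inner_apply, mul_comm]

lemma transpose_eq (hM : M.IsHermitian) : Mᵀ = M := by
  ext i j; simpa using (congrFun (congrFun hM j) i).symm

lemma dot_mulVec_symm (hM : M.IsHermitian) (x y : Fin n → ℝ) :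
    x ⬝ᵥ (M *ᵥ y) = (M *ᵥ x) ⬝ᵥ y := by
  rw [Matrix.dotProduct_mulVec, ← Matrix.mulVec_transpose, transpose_eq hM]

lemma sum_dot_wvec (hM : M.IsHermitian) (x y : Fin n → ℝ) :
    x ⬝ᵥ y = ∑ i, (wvec hM i ⬝ᵥ x) * (wvec hM i ⬝ᵥ y) := by
  classical
  set e : Fin n ≃ Fin n := (Fin.revPerm.trans (Tuple.sort hM.eigenvalues)) with he
  have key := hM.eigenvectorBasis.sum_inner_mul_inner
    ((WithLp.equiv 2 (Fin n → ℝ)).symm x) ((WithLp.equiv 2 (Fin n → ℝ)).symm y)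
  rw [← inner_eq_dot, ← key]
  rw [← Equiv.sum_comp e
    (fun j => (inner ℝ ((WithLp.equiv 2 (Fin n → ℝ)).symm x) (hM.eigenvectorBasis j) : ℝ)
      * inner ℝ (hM.eigenvectorBasis j) ((WithLp.equiv 2 (Fin n → ℝ)).symm y))]
  refine Finset.sum_congr rfl fun i _ => ?_
  have h1 : hM.eigenvectorBasis (e i)
      = (WithLp.equiv 2 (Fin n → ℝ)).symm (wvec hM i) := rfl
  rw [h1, inner_eq_dot, inner_eq_dot, dotProduct_comm]

lemma parseval_dot (hM : M.IsHermitian) (x : Fin n → ℝ) :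
    x ⬝ᵥ x = ∑ i, (wvec hM i ⬝ᵥ x) ^ 2 := by
  rw [sum_dot_wvec hM x x]; simp [sq]

lemma mulVec_wvec (hM : M.IsHermitian) (i : Fin n) :
    M *ᵥ wvec hM i = eigDesc hM i • wvec hM i :=
  hM.mulVec_eigenvectorBasis _

lemma wvec_dot (hM : M.IsHermitian) (i j : Fin n) :
    wvec hM i ⬝ᵥ wvec hM j = if i = j then 1 else 0 := by
  have horth := hM.eigenvectorBasis.orthonormal
  rw [orthonormal_iff_ite] at horth
  have h := horth (Tuple.sort hM.eigenvalues i.rev) (Tuple.sort hM.eigenvalues j.rev)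
  rw [show (inner ℝ (hM.eigenvectorBasis (Tuple.sort hM.eigenvalues i.rev))
      (hM.eigenvectorBasis (Tuple.sort hM.eigenvalues j.rev)) : ℝ)
      = wvec hM i ⬝ᵥ wvec hM j from (inner_eq_dot _ _).symm ▸ rfl] at h
  rw [h]
  congr 1
  simp only [eq_iff_iff]
  constructor
  · intro he
    exact Fin.rev_injective ((Tuple.sort hM.eigenvalues).injective he)
  · rintro rfl; rfl

lemma parseval_quad (hM : M.IsHermitian) (x : Fin n → ℝ) :
    x ⬝ᵥ (M *ᵥ x) = ∑ i, eigDesc hM i * (wvec hM i ⬝ᵥ x) ^ 2 := by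
  rw [sum_dot_wvec hM x (M *ᵥ x)]
  refine Finset.sum_congr rfl fun i _ => ?_
  have hh : wvec hM i ⬝ᵥ (M *ᵥ x) = eigDesc hM i * (wvec hM i ⬝ᵥ x) := by
    rw [dot_mulVec_symm hM, mulVec_wvec, smul_dotProduct]; rfl
  rw [hh]; ring

/-- Courant–Fischer, lower half: any subspace of dimension `≥ j+1` contains a
nonzero vector with Rayleigh quotient at most `eigDesc hM j`. -/
lemma exists_small_rayleigh (hM : M.IsHermitian) (j : Fin n)
    (V : Submodule ℝ (Fin n → ℝ)) (hV : (j : ℕ) + 1 ≤ Module.finrank ℝ V) :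
    ∃ x, x ∈ V ∧ x ≠ 0 ∧ x ⬝ᵥ (M *ᵥ x) ≤ eigDesc hM j * (x ⬝ᵥ x) := by
  classical
  set φ : (Fin n → ℝ) →ₗ[ℝ] (Fin (j : ℕ) → ℝ) :=
    LinearMap.pi (fun l : Fin (j : ℕ) => dotLin (wvec hM (Fin.castLE j.isLt.le l))) with hφ
  have hrank := LinearMap.finrank_range_add_finrank_ker φ
  rw [Module.finrank_fintype_fun_eq_card, Fintype.card_fin] at hrank
  have hrange : Module.finrank ℝ (LinearMap.range φ) ≤ (j : ℕ) := by
    calc Module.finrank ℝ (LinearMap.range φ) ≤ Module.finrank ℝ (Fin (j : ℕ) → ℝ) :=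
          Submodule.finrank_le _
      _ = (j : ℕ) := by rw [Module.finrank_fintype_fun_eq_card, Fintype.card_fin]
  have hker : n - (j : ℕ) ≤ Module.finrank ℝ (LinearMap.ker φ) := by omega
  -- intersect V with ker φ
  have hsum := Submodule.finrank_sup_add_finrank_inf_eq V (LinearMap.ker φ)
  have hsup : Module.finrank ℝ ↥(V ⊔ LinearMap.ker φ) ≤ n := by
    calc Module.finrank ℝ ↥(V ⊔ LinearMap.ker φ) ≤ Module.finrank ℝ (Fin n → ℝ) :=
          Submodule.finrank_le _
      _ = n := by rw [Module.finrank_fintype_fun_eq_card, Fintype.card_fin]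
  have hj : (j : ℕ) < n := j.isLt
  have hpos : 0 < Module.finrank ℝ ↥(V ⊓ LinearMap.ker φ) := by omega
  have hne : V ⊓ LinearMap.ker φ ≠ ⊥ := by
    intro hbot
    rw [hbot, finrank_bot] at hpos
    exact lt_irrefl 0 hpos
  obtain ⟨x, hxmem, hx0⟩ := Submodule.exists_mem_ne_zero_of_ne_bot hne
  refine ⟨x, hxmem.1, hx0, ?_⟩
  have horth : ∀ i : Fin n, i < j → wvec hM i ⬝ᵥ x = 0 := by
    intro i hij
    have hk : φ x = 0 := LinearMap.mem_ker.1 (Submodule.mem_inf.1 hxmem).2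
    have := congrFun hk ⟨(i : ℕ), hij⟩
    simpa [hφ, LinearMap.pi_apply, show Fin.castLE j.isLt.le ⟨(i : ℕ), hij⟩ = i from
      Fin.ext rfl] using this
  rw [parseval_quad hM, parseval_dot hM, Finset.mul_sum]
  refine Finset.sum_le_sum fun i _ => ?_
  by_cases hij : i < j
  · rw [horth i hij]; simp
  · push_neg at hij
    exact mul_le_mul_of_nonneg_right (eigDesc_antitone hM hij) (sq_nonneg _)

/-- Courant–Fischer, upper half (non-strict). -/
lemma le_eigDesc (hM : M.IsHermitian) (j : Fin n) (c : ℝ)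
    (V : Submodule ℝ (Fin n → ℝ)) (hV : (j : ℕ) + 1 ≤ Module.finrank ℝ V)
    (h : ∀ x, x ∈ V → x ≠ 0 → c * (x ⬝ᵥ x) ≤ x ⬝ᵥ (M *ᵥ x)) :
    c ≤ eigDesc hM j := by
  obtain ⟨x, hxV, hx0, hxr⟩ := exists_small_rayleigh hM j V hV
  have hpos := dot_self_pos hx0
  nlinarith [h x hxV hx0]

/-- Courant–Fischer, upper half (strict). -/
lemma lt_eigDesc (hM : M.IsHermitian) (j : Fin n) (c : ℝ)
    (V : Submodule ℝ (Fin n → ℝ)) (hV : (j : ℕ) + 1 ≤ Module.finrank ℝ V)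
    (h : ∀ x, x ∈ V → x ≠ 0 → c * (x ⬝ᵥ x) < x ⬝ᵥ (M *ᵥ x)) :
    c < eigDesc hM j := by
  obtain ⟨x, hxV, hx0, hxr⟩ := exists_small_rayleigh hM j V hV
  have hpos := dot_self_pos hx0
  nlinarith [h x hxV hx0]


lemma wvec_li (hM : M.IsHermitian) : LinearIndependent ℝ (wvec hM) := by
  rw [Fintype.linearIndependent_iff]
  intro g hg i
  have h := congrArg (dotLin (wvec hM i)) hg
  rw [map_sum, map_zero] at h
  simp only [LinearMap.map_smul, dotLin_apply, wvec_dot hM, smul_eq_mul,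
    Finset.sum_ite_eq', Finset.mem_univ, if_true, mul_one, mul_zero, mul_ite] at h
  simpa using h

/-- span of the eigenvectors for the `j+1` largest eigenvalues -/
noncomputable def topSpan (hM : M.IsHermitian) (j : Fin n) : Submodule ℝ (Fin n → ℝ) :=
  Submodule.span ℝ (Set.range fun l : Fin ((j : ℕ) + 1) => wvec hM (Fin.castLE j.isLt l))

lemma finrank_topSpan (hM : M.IsHermitian) (j : Fin n) :
    Module.finrank ℝ (topSpan hM j) = (j : ℕ) + 1 := by
  have hli : LinearIndependent ℝ (fun l : Fin ((j : ℕ) + 1) => wvec hM (Fin.castLE j.isLt l)) :=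
    (wvec_li hM).comp _ (Fin.strictMono_castLE j.isLt).injective
  rw [topSpan, finrank_span_eq_card hli, Fintype.card_fin]

lemma quad_ge_topSpan (hM : M.IsHermitian) (j : Fin n) :
    ∀ x ∈ topSpan hM j, eigDesc hM j * (x ⬝ᵥ x) ≤ x ⬝ᵥ (M *ᵥ x) := by
  intro x hx
  have horth : ∀ i : Fin n, j < i → wvec hM i ⬝ᵥ x = 0 := by
    intro i hji
    have hle : topSpan hM j ≤ LinearMap.ker (dotLin (wvec hM i)) := by
      rw [topSpan, Submodule.span_le]
      rintro _ ⟨l, rfl⟩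
      rw [SetLike.mem_coe, LinearMap.mem_ker, dotLin_apply, wvec_dot hM, if_neg]
      intro he
      have : (i : ℕ) = (l : ℕ) := by rw [he]; rfl
      have hlj : (l : ℕ) ≤ (j : ℕ) := Nat.lt_succ_iff.1 l.isLt
      have := this ▸ hlj
      omega
    exact LinearMap.mem_ker.1 (hle hx)
  rw [parseval_quad hM, parseval_dot hM, Finset.mul_sum]
  refine Finset.sum_le_sum fun i _ => ?_
  by_cases hij : j < i
  · rw [horth i hij]; simp
  · push_neg at hij
    exact mul_le_mul_of_nonneg_right (eigDesc_antitone hM hij) (sq_nonneg _)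

/-- global upper bound by the largest eigenvalue -/
lemma quad_le_top (hM : M.IsHermitian) (i0 : Fin n) (h0 : (i0 : ℕ) = 0) (x : Fin n → ℝ) :
    x ⬝ᵥ (M *ᵥ x) ≤ eigDesc hM i0 * (x ⬝ᵥ x) := by
  rw [parseval_quad hM, parseval_dot hM, Finset.mul_sum]
  refine Finset.sum_le_sum fun i _ => ?_
  refine mul_le_mul_of_nonneg_right (eigDesc_antitone hM ?_) (sq_nonneg _)
  rw [Fin.le_def, h0]; exact Nat.zero_le _

lemma quad_wvec (hM : M.IsHermitian) (i : Fin n) :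
    (wvec hM i) ⬝ᵥ (M *ᵥ wvec hM i) = eigDesc hM i := by
  rw [mulVec_wvec]
  have := wvec_dot hM i i
  rw [if_pos rfl] at this
  rw [show wvec hM i ⬝ᵥ (eigDesc hM i • wvec hM i) = eigDesc hM i * (wvec hM i ⬝ᵥ wvec hM i) by
    rw [dotProduct_smul]; rfl, this, mul_one]

lemma eigDesc_top_nonneg (hM : M.IsHermitian) (i0 : Fin n)
    (hq : ∀ x, 0 ≤ x ⬝ᵥ (M *ᵥ x)) : 0 ≤ eigDesc hM i0 := by
  have := hq (wvec hM i0)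
  rwa [quad_wvec hM] at this

/-- Weyl-type inequality: `λ_j(M+N) ≤ λ_j(M) + λ_max(N)`. -/
lemma weyl (hM : M.IsHermitian) (hN : N.IsHermitian) (hMN : (M + N).IsHermitian)
    (j i0 : Fin n) (h0 : (i0 : ℕ) = 0) :
    eigDesc hMN j ≤ eigDesc hM j + eigDesc hN i0 := by
  obtain ⟨x, hxV, hx0, hxr⟩ := exists_small_rayleigh hM j (topSpan hMN j)
    (le_of_eq (finrank_topSpan hMN j).symm)
  have h1 := quad_ge_topSpan hMN j x hxV
  have h2 : x ⬝ᵥ ((M + N) *ᵥ x) = x ⬝ᵥ (M *ᵥ x) + x ⬝ᵥ (N *ᵥ x) := by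
    rw [add_mulVec, dotProduct_add]
  have h3 := quad_le_top hN i0 h0 x
  have hpos := dot_self_pos hx0
  nlinarith

/-- monotonicity: adding a PSD quadratic form raises eigenvalues. -/
lemma eigDesc_mono_add (hM : M.IsHermitian) (hMN : (M + N).IsHermitian)
    (hq : ∀ x, 0 ≤ x ⬝ᵥ (N *ᵥ x)) (j : Fin n) :
    eigDesc hM j ≤ eigDesc hMN j := by
  refine le_eigDesc hMN j _ (topSpan hM j) (le_of_eq (finrank_topSpan hM j).symm) ?_
  intro x hx _
  have h1 := quad_ge_topSpan hM j x hx
  have h2 : x ⬝ᵥ ((M + N) *ᵥ x) = x ⬝ᵥ (M *ᵥ x) + x ⬝ᵥ (N *ᵥ x) := by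
    rw [add_mulVec, dotProduct_add]
  have := hq x
  linarith


lemma dot_cs (z v : Fin n → ℝ) : (z ⬝ᵥ v) ^ 2 ≤ (z ⬝ᵥ z) * (v ⬝ᵥ v) := by
  have := Finset.sum_mul_sq_le_sq_mul_sq Finset.univ z v
  simpa [dotProduct, sq, Finset.mul_sum, mul_comm] using this

lemma finrank_map_of_injOn {β : Type*} [AddCommGroup β] [Module ℝ β]
    (f : (Fin n → ℝ) →ₗ[ℝ] β) (V : Submodule ℝ (Fin n → ℝ))
    (h : ∀ x ∈ V, f x = 0 → x = 0) :
    Module.finrank ℝ (V.map f) = Module.finrank ℝ V := by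
  have hker : LinearMap.ker (f.domRestrict V) = ⊥ := by
    rw [LinearMap.ker_eq_bot']
    intro x hx
    have := h x.1 x.2 (by simpa using hx)
    exact Subtype.ext this
  have := LinearMap.finrank_range_add_finrank_ker (f.domRestrict V)
  rw [hker, finrank_bot, add_zero, LinearMap.range_domRestrict] at this
  exact this

section Blocks

variable {p q : ℕ}

lemma append_add (u u' : Fin p → ℝ) (y y' : Fin q → ℝ) :
    Fin.append (u + u') (y + y') = Fin.append u y + Fin.append u' y' := by
  funext i
  refine Fin.addCases (fun i => ?_) (fun i => ?_) i <;>
    simp [Fin.append_left, Fin.append_right]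

lemma append_smul (c : ℝ) (u : Fin p → ℝ) (y : Fin q → ℝ) :
    Fin.append (c • u) (c • y) = c • Fin.append u y := by
  funext i
  refine Fin.addCases (fun i => ?_) (fun i => ?_) i <;>
    simp [Fin.append_left, Fin.append_right]

lemma append_eq_self (x : Fin (p + q) → ℝ) :
    Fin.append (fun i => x (Fin.castAdd q i)) (fun i => x (Fin.natAdd p i)) = x := by
  funext i
  refine Fin.addCases (fun i => ?_) (fun i => ?_) i <;>
    simp [Fin.append_left, Fin.append_right]

lemma append_eq_zero_left {u : Fin p → ℝ} {y : Fin q → ℝ}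
    (h : Fin.append u y = 0) : u = 0 := by
  funext i
  have := congrFun h (Fin.castAdd q i)
  simpa [Fin.append_left] using this

lemma dot_append (u c : Fin p → ℝ) (y d : Fin q → ℝ) :
    Fin.append u y ⬝ᵥ Fin.append c d = u ⬝ᵥ c + y ⬝ᵥ d := by
  simp only [dotProduct, Fin.sum_univ_add, Fin.append_left, Fin.append_right]

lemma mulVec_append (A : Matrix (Fin (p + q)) (Fin (p + q)) ℝ)
    (u : Fin p → ℝ) (y : Fin q → ℝ) :
    A *ᵥ Fin.append u y =
      Fin.append
        ((A.submatrix (Fin.castAdd q) (Fin.castAdd q)) *ᵥ u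
          + (A.submatrix (Fin.castAdd q) (Fin.natAdd p)) *ᵥ y)
        ((A.submatrix (Fin.natAdd p) (Fin.castAdd q)) *ᵥ u
          + (A.submatrix (Fin.natAdd p) (Fin.natAdd p)) *ᵥ y) := by
  funext i
  refine Fin.addCases (fun i => ?_) (fun i => ?_) i <;>
    simp only [Matrix.mulVec, Fin.append_left, Fin.append_right, Pi.add_apply,
      dotProduct, Fin.sum_univ_add, Fin.append_left, Fin.append_right,
      Matrix.submatrix_apply]

lemma quad_append (A : Matrix (Fin (p + q)) (Fin (p + q)) ℝ)
    (u : Fin p → ℝ) (y : Fin q → ℝ) :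
    Fin.append u y ⬝ᵥ (A *ᵥ Fin.append u y) =
      u ⬝ᵥ ((A.submatrix (Fin.castAdd q) (Fin.castAdd q)) *ᵥ u)
      + u ⬝ᵥ ((A.submatrix (Fin.castAdd q) (Fin.natAdd p)) *ᵥ y)
      + y ⬝ᵥ ((A.submatrix (Fin.natAdd p) (Fin.castAdd q)) *ᵥ u)
      + y ⬝ᵥ ((A.submatrix (Fin.natAdd p) (Fin.natAdd p)) *ᵥ y) := by
  rw [mulVec_append, dot_append, dotProduct_add, dotProduct_add]
  ring

end Blocks


section Schur

variable {p q : ℕ} {D : Matrix (Fin q) (Fin q) ℝ}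

/-- the shifted matrix `t•1 - D` -/
noncomputable def Emat (D : Matrix (Fin q) (Fin q) ℝ) (t : ℝ) : Matrix (Fin q) (Fin q) ℝ :=
  t • (1 : Matrix (Fin q) (Fin q) ℝ) - D

lemma Emat_herm (hD : D.IsHermitian) (t : ℝ) : (Emat D t).IsHermitian := by
  unfold Matrix.IsHermitian Emat
  rw [conjTranspose_sub, conjTranspose_smul, conjTranspose_one, hD, star_trivial]

lemma Emat_mulVec (t : ℝ) (y : Fin q → ℝ) : Emat D t *ᵥ y = t • y - D *ᵥ y := by
  rw [Emat, sub_mulVec, smul_mulVec, one_mulVec]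

lemma Emat_quad_ge (hD : D.IsHermitian) (i0 : Fin q) (h0 : (i0 : ℕ) = 0) (t : ℝ)
    (y : Fin q → ℝ) :
    (t - eigDesc hD i0) * (y ⬝ᵥ y) ≤ y ⬝ᵥ (Emat D t *ᵥ y) := by
  have h1 := quad_le_top hD i0 h0 y
  rw [Emat_mulVec, dotProduct_sub]
  have h2 : y ⬝ᵥ (t • y) = t * (y ⬝ᵥ y) := by rw [dotProduct_smul]; rfl
  rw [h2]; ring_nf; linarith

variable (hD : D.IsHermitian) {i0 : Fin q} {t : ℝ}

lemma Emat_isUnit_det (hD : D.IsHermitian) (h0 : (i0 : ℕ) = 0)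
    (ht : eigDesc hD i0 < t) : IsUnit (Emat D t).det := by
  have hpd : (Emat D t).PosDef := by
    refine PosDef.of_dotProduct_mulVec_pos (Emat_herm hD t) fun x hx => ?_
    have h1 := Emat_quad_ge hD i0 h0 t x
    have h2 := dot_self_pos hx
    calc (0:ℝ) < (t - eigDesc hD i0) * (x ⬝ᵥ x) := by nlinarith
      _ ≤ x ⬝ᵥ (Emat D t *ᵥ x) := h1
      _ = dotProduct (star x) (Emat D t *ᵥ x) := by rw [star_trivial]
  exact isUnit_iff_ne_zero.2 (ne_of_gt hpd.det_pos)

lemma Emat_mulVec_inv (h0 : (i0 : ℕ) = 0) (ht : eigDesc hD i0 < t) (v : Fin q → ℝ) :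
    Emat D t *ᵥ ((Emat D t)⁻¹ *ᵥ v) = v := by
  rw [mulVec_mulVec, Matrix.mul_nonsing_inv _ (Emat_isUnit_det hD h0 ht), one_mulVec]

lemma Emat_inv_herm (h0 : (i0 : ℕ) = 0) (ht : eigDesc hD i0 < t) :
    ((Emat D t)⁻¹)ᵀ = (Emat D t)⁻¹ := by
  rw [Matrix.transpose_nonsing_inv, transpose_eq (Emat_herm hD t)]


variable {C : Matrix (Fin p) (Fin q) ℝ}

lemma real_conjT {a b : Type*} [Fintype a] [Fintype b] (X : Matrix a b ℝ) : Xᴴ = Xᵀ := by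
  ext i j; simp [conjTranspose_apply]

/-- `C (t•1 - D)⁻¹ Cᵀ` -/
noncomputable def Pmat (C : Matrix (Fin p) (Fin q) ℝ) (D : Matrix (Fin q) (Fin q) ℝ) (t : ℝ) :
    Matrix (Fin p) (Fin p) ℝ :=
  C * (Emat D t)⁻¹ * Cᵀ

lemma Pmat_herm (hD : D.IsHermitian) (h0 : (i0 : ℕ) = 0) (ht : eigDesc hD i0 < t) :
    (Pmat C D t).IsHermitian := by
  unfold Matrix.IsHermitian Pmat
  rw [real_conjT, transpose_mul, transpose_mul, transpose_transpose,
    Emat_inv_herm hD h0 ht]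
  exact (Matrix.mul_assoc _ _ _).symm

lemma dot_C_mulVec (x : Fin p → ℝ) (w : Fin q → ℝ) :
    x ⬝ᵥ (C *ᵥ w) = (Cᵀ *ᵥ x) ⬝ᵥ w := by
  rw [Matrix.dotProduct_mulVec, ← Matrix.mulVec_transpose]

lemma Pmat_mulVec (u : Fin p → ℝ) :
    Pmat C D t *ᵥ u = C *ᵥ ((Emat D t)⁻¹ *ᵥ (Cᵀ *ᵥ u)) := by
  rw [Pmat, ← mulVec_mulVec, ← mulVec_mulVec]

lemma Pmat_quad (hD : D.IsHermitian) (h0 : (i0 : ℕ) = 0) (ht : eigDesc hD i0 < t)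
    (u : Fin p → ℝ) :
    u ⬝ᵥ (Pmat C D t *ᵥ u) =
      ((Emat D t)⁻¹ *ᵥ (Cᵀ *ᵥ u)) ⬝ᵥ (Emat D t *ᵥ ((Emat D t)⁻¹ *ᵥ (Cᵀ *ᵥ u))) := by
  rw [Pmat_mulVec, dot_C_mulVec, Emat_mulVec_inv hD h0 ht, dotProduct_comm]

lemma Pmat_psd (hD : D.IsHermitian) (h0 : (i0 : ℕ) = 0) (ht : eigDesc hD i0 < t)
    (u : Fin p → ℝ) : 0 ≤ u ⬝ᵥ (Pmat C D t *ᵥ u) := by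
  rw [Pmat_quad hD h0 ht]
  set z := (Emat D t)⁻¹ *ᵥ (Cᵀ *ᵥ u)
  have h1 := Emat_quad_ge hD i0 h0 t z
  have h2 := dot_self_nonneg z
  nlinarith

lemma Pmat_quad_le (hD : D.IsHermitian) (h0 : (i0 : ℕ) = 0) (ht : eigDesc hD i0 < t)
    (u : Fin p → ℝ) :
    (u ⬝ᵥ (Pmat C D t *ᵥ u)) * (t - eigDesc hD i0) ≤ u ⬝ᵥ ((C * Cᵀ) *ᵥ u) := by
  set z := (Emat D t)⁻¹ *ᵥ (Cᵀ *ᵥ u) with hz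
  set v := Cᵀ *ᵥ u with hv
  have hEz : Emat D t *ᵥ z = v := Emat_mulVec_inv hD h0 ht v
  have hq : u ⬝ᵥ (Pmat C D t *ᵥ u) = z ⬝ᵥ (Emat D t *ᵥ z) := Pmat_quad hD h0 ht u
  have hvv : u ⬝ᵥ ((C * Cᵀ) *ᵥ u) = v ⬝ᵥ v := by
    rw [← mulVec_mulVec, dot_C_mulVec]
  set q := z ⬝ᵥ (Emat D t *ᵥ z) with hqdef
  have hq0 : 0 ≤ q := by rw [← hq]; exact Pmat_psd hD h0 ht (C := C) u
  have hcs : q ^ 2 ≤ (z ⬝ᵥ z) * (v ⬝ᵥ v) := by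
    have := dot_cs z v
    rwa [show z ⬝ᵥ v = q by rw [← hEz, dot_mulVec_symm (Emat_herm hD t), dotProduct_comm]] at this
  have hlow : (t - eigDesc hD i0) * (z ⬝ᵥ z) ≤ q := Emat_quad_ge hD i0 h0 t z
  have htm : 0 < t - eigDesc hD i0 := by linarith
  have hzz := dot_self_nonneg z
  have hvv0 := dot_self_nonneg v
  rw [hq, hvv]
  rcases eq_or_lt_of_le hq0 with hq0' | hq0'
  · rw [← hq0']; simpa using hvv0
  · nlinarith [mul_le_mul_of_nonneg_right hlow hvv0, mul_le_mul_of_nonneg_left hcs htm.le]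

lemma Pmat_top_le (hD : D.IsHermitian) (h0 : (i0 : ℕ) = 0) (ht : eigDesc hD i0 < t)
    (hP : (Pmat C D t).IsHermitian) (hCC : (C * Cᵀ).IsHermitian)
    {j0 : Fin p} (hj0 : (j0 : ℕ) = 0) :
    eigDesc hP j0 ≤ eigDesc hCC j0 / (t - eigDesc hD i0) := by
  have htm : 0 < t - eigDesc hD i0 := by linarith
  rw [le_div_iff₀ htm]
  set w := wvec hP j0 with hw
  have h1 : eigDesc hP j0 = w ⬝ᵥ (Pmat C D t *ᵥ w) := (quad_wvec hP j0).symm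
  have h2 := Pmat_quad_le hD h0 ht (C := C) w
  have h3 := quad_le_top hCC j0 hj0 w
  have h4 : w ⬝ᵥ w = 1 := by
    have := wvec_dot hP j0 j0; rwa [if_pos rfl] at this
  rw [h4, mul_one] at h3
  calc eigDesc hP j0 * (t - eigDesc hD i0)
      = (w ⬝ᵥ (Pmat C D t *ᵥ w)) * (t - eigDesc hD i0) := by rw [← h1]
    _ ≤ w ⬝ᵥ ((C * Cᵀ) *ᵥ w) := h2
    _ ≤ eigDesc hCC j0 := h3

end Schur


section Main

variable {k m : ℕ} {A : Matrix (Fin ((k + 1) + (m + 1))) (Fin ((k + 1) + (m + 1))) ℝ}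

lemma symm_entries (hA : A.IsHermitian) (a b : Fin ((k + 1) + (m + 1))) : A a b = A b a := by
  conv_lhs => rw [← hA]
  simp [conjTranspose_apply]

lemma submatrix_natAdd_castAdd (hA : A.IsHermitian) :
    A.submatrix (Fin.natAdd (k + 1)) (Fin.castAdd (m + 1)) =
      (A.submatrix (Fin.castAdd (m + 1)) (Fin.natAdd (k + 1)))ᵀ := by
  ext i j
  simp only [submatrix_apply, transpose_apply]
  exact symm_entries hA _ _

lemma stepA
    (hA : A.IsHermitian)
    (hB : (A.submatrix (Fin.castAdd (m + 1)) (Fin.castAdd (m + 1))).IsHermitian)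
    (hD : (A.submatrix (Fin.natAdd (k + 1)) (Fin.natAdd (k + 1))).IsHermitian)
    (t : ℝ) (ht : eigDesc hD 0 < t) (j : Fin (k + 1)) (htj : t < eigDesc hB j) :
    t < eigDesc hA (Fin.castAdd (m + 1) j) := by
  set Bm := A.submatrix (Fin.castAdd (m + 1)) (Fin.castAdd (m + 1)) with hBm
  set Cm := A.submatrix (Fin.castAdd (m + 1)) (Fin.natAdd (k + 1)) with hCm
  set Dm := A.submatrix (Fin.natAdd (k + 1)) (Fin.natAdd (k + 1)) with hDm
  have h0 : ((0 : Fin (m + 1)) : ℕ) = 0 := rfl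
  set P := Pmat Cm Dm t with hPdef
  have hP : P.IsHermitian := Pmat_herm hD h0 ht
  set Mt := Bm + P with hMtdef
  have hMt : Mt.IsHermitian := hB.add hP
  have hmono : eigDesc hB j ≤ eigDesc hMt j :=
    eigDesc_mono_add hB hMt (fun x => Pmat_psd hD h0 ht x) j
  -- the lifting linear map
  set g : (Fin (k + 1) → ℝ) →ₗ[ℝ] (Fin (m + 1) → ℝ) :=
    ((Emat Dm t)⁻¹).mulVecLin.comp (Cmᵀ).mulVecLin with hg
  set L : (Fin (k + 1) → ℝ) →ₗ[ℝ] (Fin ((k + 1) + (m + 1)) → ℝ) :=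
    { toFun := fun u => Fin.append u (g u)
      map_add' := fun u u' => by
        show Fin.append (u + u') (g (u + u')) = _
        rw [g.map_add, append_add]
      map_smul' := fun c u => by
        show Fin.append (c • u) (g (c • u)) = _
        rw [g.map_smul, RingHom.id_apply, append_smul] } with hL
  set V := (topSpan hMt j).map L with hV
  have hLinj : ∀ x ∈ topSpan hMt j, L x = 0 → x = 0 := fun x _ hx => append_eq_zero_left hx
  have hdim : Module.finrank ℝ V = (j : ℕ) + 1 := by
    rw [hV, finrank_map_of_injOn L _ hLinj, finrank_topSpan]
  -- quadratic identity along L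
  have hquad : ∀ u : Fin (k + 1) → ℝ,
      (L u) ⬝ᵥ (A *ᵥ (L u)) - t * ((L u) ⬝ᵥ (L u))
        = u ⬝ᵥ (Mt *ᵥ u) - t * (u ⬝ᵥ u) := by
    intro u
    set y := g u with hy
    have hyval : y = (Emat Dm t)⁻¹ *ᵥ (Cmᵀ *ᵥ u) := rfl
    have hLu : L u = Fin.append u y := rfl
    have hEy : Emat Dm t *ᵥ y = Cmᵀ *ᵥ u := by rw [hyval]; exact Emat_mulVec_inv hD h0 ht _
    have f0 : (L u) ⬝ᵥ (A *ᵥ (L u)) =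
        u ⬝ᵥ (Bm *ᵥ u) + u ⬝ᵥ (Cm *ᵥ y) + y ⬝ᵥ (Cmᵀ *ᵥ u) + y ⬝ᵥ (Dm *ᵥ y) := by
      rw [hLu, quad_append, submatrix_natAdd_castAdd hA]
    have f1 : u ⬝ᵥ (Cm *ᵥ y) = u ⬝ᵥ (P *ᵥ u) := by
      rw [hPdef, Pmat_mulVec, hyval]
    have f2 : y ⬝ᵥ (Cmᵀ *ᵥ u) = u ⬝ᵥ (P *ᵥ u) := by
      rw [← hEy, hPdef, Pmat_quad hD h0 ht, ← hyval]
    have f3 : y ⬝ᵥ (Emat Dm t *ᵥ y) = t * (y ⬝ᵥ y) - y ⬝ᵥ (Dm *ᵥ y) := by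
      rw [Emat_mulVec, dotProduct_sub]
      have : y ⬝ᵥ (t • y) = t * (y ⬝ᵥ y) := by rw [dotProduct_smul]; rfl
      rw [this]
    have f2' : y ⬝ᵥ (Emat Dm t *ᵥ y) = u ⬝ᵥ (P *ᵥ u) := by rw [hEy]; exact f2
    have f4 : u ⬝ᵥ (Mt *ᵥ u) = u ⬝ᵥ (Bm *ᵥ u) + u ⬝ᵥ (P *ᵥ u) := by
      rw [hMtdef, add_mulVec, dotProduct_add]
    have f5 : (L u) ⬝ᵥ (L u) = u ⬝ᵥ u + y ⬝ᵥ y := by rw [hLu, dot_append]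
    rw [f0, f1, f2, f4, f5]
    have := f2'.symm.trans f3
    linarith
  -- apply Courant–Fischer
  have hfinal := lt_eigDesc hA (Fin.castAdd (m + 1) j) t V
    (by rw [hdim]; simp) ?_
  · exact hfinal
  rintro x hx hx0
  obtain ⟨u, huV, rfl⟩ := Submodule.mem_map.1 hx
  have hu0 : u ≠ 0 := fun h => hx0 (by rw [h, map_zero])
  have h1 := quad_ge_topSpan hMt j u huV
  have h2 := dot_self_pos hu0
  have h3 := hquad u
  nlinarith


set_option maxHeartbeats 2000000 in
lemma stepB
    (hA : A.IsHermitian)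
    (hB : (A.submatrix (Fin.castAdd (m + 1)) (Fin.castAdd (m + 1))).IsHermitian)
    (hD : (A.submatrix (Fin.natAdd (k + 1)) (Fin.natAdd (k + 1))).IsHermitian)
    (hCC : ((A.submatrix (Fin.castAdd (m + 1)) (Fin.natAdd (k + 1))) *
        (A.submatrix (Fin.castAdd (m + 1)) (Fin.natAdd (k + 1)))ᵀ).IsHermitian)
    (t : ℝ) (ht : eigDesc hD 0 < t) (j : Fin (k + 1))
    (htA : t < eigDesc hA (Fin.castAdd (m + 1) j)) :
    t < eigDesc hB j + eigDesc hCC 0 / (t - eigDesc hD 0) := by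
  set Bm := A.submatrix (Fin.castAdd (m + 1)) (Fin.castAdd (m + 1)) with hBm
  set Cm := A.submatrix (Fin.castAdd (m + 1)) (Fin.natAdd (k + 1)) with hCm
  set Dm := A.submatrix (Fin.natAdd (k + 1)) (Fin.natAdd (k + 1)) with hDm
  have h0 : ((0 : Fin (m + 1)) : ℕ) = 0 := rfl
  have h0' : ((0 : Fin (k + 1)) : ℕ) = 0 := rfl
  set P := Pmat Cm Dm t with hPdef
  have hP : P.IsHermitian := Pmat_herm hD h0 ht
  set Mt := Bm + P with hMtdef
  have hMt : Mt.IsHermitian := hB.add hP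
  set V := topSpan hA (Fin.castAdd (m + 1) j) with hV
  have hquadV : ∀ x ∈ V, x ≠ 0 → t * (x ⬝ᵥ x) < x ⬝ᵥ (A *ᵥ x) := by
    intro x hx hx0
    have h1 := quad_ge_topSpan hA (Fin.castAdd (m + 1) j) x hx
    have h2 := dot_self_pos hx0
    nlinarith
  set π : (Fin ((k + 1) + (m + 1)) → ℝ) →ₗ[ℝ] (Fin (k + 1) → ℝ) :=
    LinearMap.funLeft ℝ ℝ (Fin.castAdd (m + 1)) with hπ
  have hπinj : ∀ x ∈ V, π x = 0 → x = 0 := by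
    intro x hx hx0
    by_contra hxne
    have hxu : ∀ i, x (Fin.castAdd (m + 1) i) = 0 := fun i => congrFun hx0 i
    set y : Fin (m + 1) → ℝ := fun i => x (Fin.natAdd (k + 1) i) with hy
    have hxapp : Fin.append (fun i => x (Fin.castAdd (m + 1) i)) y = x := append_eq_self x
    have hzero : (fun i => x (Fin.castAdd (m + 1) i)) = (0 : Fin (k + 1) → ℝ) :=
      funext hxu
    have hxapp0 : Fin.append (0 : Fin (k + 1) → ℝ) y = x := by
      rw [← hzero, hxapp]
    have hq := quad_append A (0 : Fin (k + 1) → ℝ) y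
    rw [hxapp0] at hq
    have hDq := quad_le_top hD 0 h0 y
    have hxx : x ⬝ᵥ x = y ⬝ᵥ y := by
      rw [← hxapp0, dot_append]; simp
    have hquadx := hquadV x hx hxne
    rw [hxx, hq] at hquadx
    simp only [mulVec_zero, dotProduct_zero, zero_dotProduct, zero_add, add_zero] at hquadx
    have hyy := dot_self_nonneg y
    nlinarith
  set U := V.map π with hU
  have hdimU : Module.finrank ℝ U = (j : ℕ) + 1 := by
    rw [hU, finrank_map_of_injOn π V hπinj, hV, finrank_topSpan]
    simp
  have hquadU : ∀ u ∈ U, u ≠ 0 → t * (u ⬝ᵥ u) < u ⬝ᵥ (Mt *ᵥ u) := by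
    rintro _ hu hu0
    obtain ⟨x, hxV, rfl⟩ := Submodule.mem_map.1 hu
    have hx0 : x ≠ 0 := fun h => hu0 (by rw [h, map_zero])
    set u : Fin (k + 1) → ℝ := π x with hu'
    have huval : u = fun i => x (Fin.castAdd (m + 1) i) := rfl
    set y : Fin (m + 1) → ℝ := fun i => x (Fin.natAdd (k + 1) i) with hy
    have hxapp : Fin.append u y = x := append_eq_self x
    set y' := (Emat Dm t)⁻¹ *ᵥ (Cmᵀ *ᵥ u) with hy'
    set v := Cmᵀ *ᵥ u with hv
    have hEy' : Emat Dm t *ᵥ y' = v := Emat_mulVec_inv hD h0 ht v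
    set w := y' - y with hw
    -- expand the quadratic form of A
    have f0 : x ⬝ᵥ (A *ᵥ x) =
        u ⬝ᵥ (Bm *ᵥ u) + u ⬝ᵥ (Cm *ᵥ y) + y ⬝ᵥ (Cmᵀ *ᵥ u) + y ⬝ᵥ (Dm *ᵥ y) := by
      rw [← hxapp, quad_append, submatrix_natAdd_castAdd hA]
    have f1 : u ⬝ᵥ (Cm *ᵥ y) = v ⬝ᵥ y := dot_C_mulVec u y
    have f2 : y ⬝ᵥ (Cmᵀ *ᵥ u) = v ⬝ᵥ y := dotProduct_comm y v
    have f3 : u ⬝ᵥ (Mt *ᵥ u) = u ⬝ᵥ (Bm *ᵥ u) + u ⬝ᵥ (P *ᵥ u) := by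
      rw [hMtdef, add_mulVec, dotProduct_add]
    have f3' : u ⬝ᵥ (P *ᵥ u) = y' ⬝ᵥ (Emat Dm t *ᵥ y') := Pmat_quad hD h0 ht u
    have f4 : w ⬝ᵥ (Emat Dm t *ᵥ w) =
        y' ⬝ᵥ (Emat Dm t *ᵥ y') - y' ⬝ᵥ (Emat Dm t *ᵥ y) - y ⬝ᵥ (Emat Dm t *ᵥ y')
          + y ⬝ᵥ (Emat Dm t *ᵥ y) := by
      rw [hw, Matrix.mulVec_sub, sub_dotProduct, dotProduct_sub, dotProduct_sub]
      ring
    have f5 : y' ⬝ᵥ (Emat Dm t *ᵥ y) = v ⬝ᵥ y := by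
      rw [dot_mulVec_symm (Emat_herm hD t), hEy']
    have f5' : y ⬝ᵥ (Emat Dm t *ᵥ y') = v ⬝ᵥ y := by
      rw [hEy', dotProduct_comm]
    have f6 : y ⬝ᵥ (Emat Dm t *ᵥ y) = t * (y ⬝ᵥ y) - y ⬝ᵥ (Dm *ᵥ y) := by
      rw [Emat_mulVec, dotProduct_sub]
      have : y ⬝ᵥ (t • y) = t * (y ⬝ᵥ y) := by rw [dotProduct_smul]; rfl
      rw [this]
    have f7 : x ⬝ᵥ x = u ⬝ᵥ u + y ⬝ᵥ y := by rw [← hxapp, dot_append]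
    have f8 : 0 ≤ w ⬝ᵥ (Emat Dm t *ᵥ w) := by
      have h1 := Emat_quad_ge hD 0 h0 t w
      have h2 := dot_self_nonneg w
      nlinarith
    have hquadx := hquadV x hxV hx0
    have f7t : t * (x ⬝ᵥ x) = t * (u ⬝ᵥ u) + t * (y ⬝ᵥ y) := by rw [f7]; ring
    linarith [f0, f1, f2, f3, f3', f4, f5, f5', f6, f7t, f8, hquadx]
  have hfinal := lt_eigDesc hMt j t U (by rw [hdimU]) hquadU
  have hweyl := weyl hB hP hMt j 0 h0'
  have htop := Pmat_top_le (C := Cm) hD h0 ht hP hCC h0'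
  linarith

end Main

end Wielandt

set_option maxHeartbeats 2000000 in
open Wielandt in
/-- **Wielandt's inequality.**  Let `A` be a real symmetric matrix of size
`(k+1) + (m+1)` with top-left block `B` (size `k+1`), top-right block `C` and
bottom-right block `D` (size `m+1`).  If the smallest eigenvalue of `B` exceeds the
largest eigenvalue of `D`, then for every `j`,
`0 ≤ λ_j(A) - λ_j(B) ≤ λ₁(C Cᵀ) / (λ_j(B) - λ₁(D))`,
eigenvalues being listed in decreasing order. -/
theorem wielandt_inequality
    (k m : ℕ)
    (A : Matrix (Fin ((k + 1) + (m + 1))) (Fin ((k + 1) + (m + 1))) ℝ)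
    (hA : A.IsHermitian)
    (hB : (A.submatrix (Fin.castAdd (m + 1)) (Fin.castAdd (m + 1))).IsHermitian)
    (hD : (A.submatrix (Fin.natAdd (k + 1)) (Fin.natAdd (k + 1))).IsHermitian)
    (hCC : ((A.submatrix (Fin.castAdd (m + 1)) (Fin.natAdd (k + 1))) *
        (A.submatrix (Fin.castAdd (m + 1)) (Fin.natAdd (k + 1)))ᵀ).IsHermitian)
    (hgap : eigDesc hD 0 < eigDesc hB (Fin.last k)) :
    ∀ j : Fin (k + 1),
      0 ≤ eigDesc hA (Fin.castAdd (m + 1) j) - eigDesc hB j ∧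
      eigDesc hA (Fin.castAdd (m + 1) j) - eigDesc hB j ≤
        eigDesc hCC 0 / (eigDesc hB j - eigDesc hD 0) := by
  intro j
  have hμj : eigDesc hD 0 < eigDesc hB j :=
    lt_of_lt_of_le hgap (eigDesc_antitone hB (Fin.le_last j))
  have hγ : 0 ≤ eigDesc hCC 0 := by
    refine eigDesc_top_nonneg hCC 0 (fun x => ?_)
    rw [← mulVec_mulVec, dot_C_mulVec]
    exact dot_self_nonneg _
  set μ := eigDesc hD 0 with hμdef
  set lj := eigDesc hB j with hljdef
  set lA := eigDesc hA (Fin.castAdd (m + 1) j) with hlAdef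
  set γ := eigDesc hCC 0 with hγdef
  have part1 : 0 ≤ lA - lj := by
    by_contra hcon
    push_neg at hcon
    set t := max ((μ + lj) / 2) ((lA + lj) / 2) with htdef
    have ht : μ < t := lt_max_iff.2 (Or.inl (by linarith))
    have htj : t < lj := max_lt (by linarith) (by linarith)
    have htA : lA ≤ t := le_max_iff.2 (Or.inr (by linarith))
    have := stepA hA hB hD t ht j htj
    linarith
  refine ⟨part1, ?_⟩
  by_contra hcon
  push_neg at hcon
  have hR : 0 ≤ γ / (lj - μ) := div_nonneg hγ (by linarith)
  set R := γ / (lj - μ) with hRdef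
  set t := (lj + R + lA) / 2 with htdef
  have ht : μ < t := by linarith
  have htA : t < lA := by linarith
  have hstep := stepB hA hB hD hCC t ht j htA
  have hmono : γ / (t - μ) ≤ R := by
    rw [hRdef]
    gcongr
    · linarith
  linarith
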